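/- arXiv:2202.02880 — 4 statements merged into one kernel-verified Lean document; each statement's English description precedes it below -/
import Mathlib

section
/- Let a < 0, γ > 0, α > 0, c = √(a² + γ), and k₃, k₄ constants with k₃ ≠ 0. Then p(t) = k₄·(k₃·e^{2ct} + 1)²·e^{−2ct} + (1 + αγ)·(k₃·e^{2ct} + 1)/(2c·k₃·e^{2ct}) solves the linear ODE ṗ = 2γ·x(t)·p − 2ap − 1 − αγ, where x(t) = (1/γ)·(a + c − 2c/(k₃·e^{2ct} + 1)). -/
/-!
With `E = exp (2 c t)` and `A = k₃ E + 1`, the coefficient of the linear equation simplifies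
to `2 γ x - 2 a = 2 c (k₃ E - 1) / A`. For this coefficient `A² / E` solves
the homogeneous equation and `A / (2 c k₃ E) = 1 / (2 c) + 1 / (2 c k₃ E)` solves `ṗ = … p - 1`;
`p` is `k₄` times the first plus `1 + α γ` times the second.
-/

open Real

lemma hasDerivAt_const_mul_exp (k c t : ℝ) :
    HasDerivAt (fun s => k * exp (c * s)) (k * (c * exp (c * t))) t := by
  simpa [mul_comm] using (((hasDerivAt_id t).const_mul c).exp).const_mul k

lemma hasDerivAt_exp_neg_mul (c t : ℝ) :
    HasDerivAt (fun s => exp (-(c * s))) (-c * exp (-(c * t))) t := by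
  simpa [mul_comm] using ((hasDerivAt_id t).const_mul c).neg.exp

lemma hasDerivAt_sq_mul_exp_neg (k c t : ℝ) :
    HasDerivAt (fun s => (k * exp (2 * c * s) + 1) ^ 2 * exp (-(2 * c * s)))
      (2 * c * (k * exp (2 * c * t) - 1) / (k * exp (2 * c * t) + 1) *
        ((k * exp (2 * c * t) + 1) ^ 2 * exp (-(2 * c * t)))) t := by
  have h := (((hasDerivAt_const_mul_exp k (2 * c) t).add_const 1).fun_pow 2).mul
    (hasDerivAt_exp_neg_mul (2 * c) t)
  refine h.congr_deriv ?_
  rw [exp_neg]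
  field_simp
  ring

lemma hasDerivAt_div_const_mul_exp {k c t : ℝ} (hk : k ≠ 0) (hc : c ≠ 0)
    (hA : k * exp (2 * c * t) + 1 ≠ 0) :
    HasDerivAt (fun s => (k * exp (2 * c * s) + 1) / (2 * c * k * exp (2 * c * s)))
      (2 * c * (k * exp (2 * c * t) - 1) / (k * exp (2 * c * t) + 1) *
        ((k * exp (2 * c * t) + 1) / (2 * c * k * exp (2 * c * t))) - 1) t := by
  have hden : 2 * c * k * exp (2 * c * t) ≠ 0 := by positivity
  have h := ((hasDerivAt_const_mul_exp k (2 * c) t).add_const 1).div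
    (hasDerivAt_const_mul_exp (2 * c * k) (2 * c) t) hden
  refine h.congr_deriv ?_
  field_simp
  ring

theorem stmt_6_general (a γ α k₃ k₄ : ℝ) (hγ : 0 < γ)
    (hk : k₃ ≠ 0) (c : ℝ) (hc : c = Real.sqrt (a ^ 2 + γ))
    (x p : ℝ → ℝ)
    (hx : ∀ t, x t = (1 / γ) * (a + c - 2 * c / (k₃ * Real.exp (2 * c * t) + 1)))
    (hp : ∀ t, p t = k₄ * (k₃ * Real.exp (2 * c * t) + 1) ^ 2 * Real.exp (-(2 * c * t))
        + (1 + α * γ) * (k₃ * Real.exp (2 * c * t) + 1) / (2 * c * k₃ * Real.exp (2 * c * t))) :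
    ∀ t, k₃ * Real.exp (2 * c * t) + 1 ≠ 0 →
      HasDerivAt p (2 * γ * x t * p t - 2 * a * p t - 1 - α * γ) t := by
  intro t hA
  have hc0 : c ≠ 0 := by rw [hc]; positivity
  have hcoef : 2 * γ * x t - 2 * a =
      2 * c * (k₃ * exp (2 * c * t) - 1) / (k₃ * exp (2 * c * t) + 1) := by
    rw [hx t]
    field_simp
    ring
  have h := ((hasDerivAt_sq_mul_exp_neg k₃ c t).const_mul k₄).add
    ((hasDerivAt_div_const_mul_exp hk hc0 hA).const_mul (1 + α * γ))
  refine (h.congr_deriv ?_).congr_of_eventuallyEq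
    (.of_forall fun s => by rw [hp s, Pi.add_apply]; ring)
  rw [hp t]
  linear_combination -(k₄ * (k₃ * exp (2 * c * t) + 1) ^ 2 * exp (-(2 * c * t))
      + (1 + α * γ) * (k₃ * exp (2 * c * t) + 1) / (2 * c * k₃ * exp (2 * c * t))) * hcoef

theorem stmt_6 (a γ α k₃ k₄ : ℝ) (ha : a < 0) (hγ : 0 < γ) (hα : 0 < α)
    (hk : k₃ ≠ 0) (c : ℝ) (hc : c = Real.sqrt (a ^ 2 + γ))
    (x p : ℝ → ℝ)
    (hx : ∀ t, x t = (1 / γ) * (a + c - 2 * c / (k₃ * Real.exp (2 * c * t) + 1)))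
    (hp : ∀ t, p t = k₄ * (k₃ * Real.exp (2 * c * t) + 1) ^ 2 * Real.exp (-(2 * c * t))
        + (1 + α * γ) * (k₃ * Real.exp (2 * c * t) + 1) / (2 * c * k₃ * Real.exp (2 * c * t))) :
    ∀ t, k₃ * Real.exp (2 * c * t) + 1 ≠ 0 →
      HasDerivAt p (2 * γ * x t * p t - 2 * a * p t - 1 - α * γ) t :=
  stmt_6_general a γ α k₃ k₄ hγ hk c hc x p hx hp
end

section
/- Let a < 0, α > 0, γ > 0. Any optimal solution (x*, y*) of the problem: minimize x + αy + 2aα over x ≥ 0, y ≥ 0 subject to 2ax + 1 ≥ 0, the 2×2 matrix [[2ay − γ, y], [y, −1]] being negative semidefinite, and the 2×2 matrix [[x, 1], [1, y]] being positive semidefinite, satisfies x* > 0, y* > 0and x*·y* = 1 (equivalently, the matrix [[x*,1],[1,y*]] has rank 1). -/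
/-!
The constraint `[[x, 1], [1, y]] ⪰ 0` says exactly `x, y ≥ 0` and `x * y ≥ 1`, so both coordinates
of a feasible point are positive. Replacing `x` by `y⁻¹ ≤ x` keeps the point feasible (since `a ≤ 0`,
the constraint `2 a x + 1 ≥ 0` only gets easier as `x` decreases) and does not increase the
objective, so at an optimum `x ≤ y⁻¹`, i.e. `x * y = 1`.
-/

/-- Feasibility for the scalar SDP relaxation of the time-invariant
channel gain problem. -/
def ScalarSDPFeasible (a γ x y : ℝ) : Prop :=
  0 ≤ x ∧ 0 ≤ y ∧ 0 ≤ 2 * a * x + 1 ∧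
    (-(!![2 * a * y - γ, y; y, -1])).PosSemidef ∧
    (!![x, 1; 1, y]).PosSemidef

theorem Matrix.posSemidef_two_iff {p q r : ℝ} :
    (!![p, q; q, r]).PosSemidef ↔ 0 ≤ p ∧ 0 ≤ r ∧ q ^ 2 ≤ p * r := by
  have hherm : (!![p, q; q, r]).IsHermitian := by
    ext i j; fin_cases i <;> fin_cases j <;> rfl
  have hquad : ∀ v : Fin 2 → ℝ, dotProduct (star v) (!![p, q; q, r].mulVec v) =
      p * v 0 ^ 2 + 2 * q * v 0 * v 1 + r * v 1 ^ 2 := by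
    intro v
    simp only [star_trivial, dotProduct, Matrix.mulVec, Fin.sum_univ_two, Matrix.of_apply,
      Matrix.cons_val', Matrix.cons_val_zero, Matrix.cons_val_one, Matrix.empty_val',
      Matrix.cons_val_fin_one]
    ring
  rw [Matrix.posSemidef_iff_dotProduct_mulVec]
  simp only [hherm, hquad, true_and]
  constructor
  · intro h
    have hp : 0 ≤ p := by simpa using h ![1, 0]
    have hr : 0 ≤ r := by simpa using h ![0, 1]
    refine ⟨hp, hr, ?_⟩
    by_contra! hlt
    -- testing against `(r, -q)` and `(q, -p)` gives `r (p r - q²) ≥ 0` and `p (p r - q²) ≥ 0`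
    have hr0 : r = 0 := by
      have := h ![r, -q]
      simp only [Matrix.cons_val_zero, Matrix.cons_val_one] at this
      nlinarith
    have hp0 : p = 0 := by
      have := h ![q, -p]
      simp only [Matrix.cons_val_zero, Matrix.cons_val_one] at this
      nlinarith
    have := h ![1, -q]
    simp only [Matrix.cons_val_zero, Matrix.cons_val_one, hr0, hp0] at this
    nlinarith
  · rintro ⟨hp, hr, hd⟩ v
    rcases hp.lt_or_eq with hp | rfl
    · -- completing the square: `p * Q(v) = (p v₀ + q v₁)² + (p r - q²) v₁²`
      nlinarith [sq_nonneg (p * v 0 + q * v 1), mul_nonneg (sub_nonneg.2 hd) (sq_nonneg (v 1))]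
    · obtain rfl : q = 0 := by nlinarith
      nlinarith [mul_nonneg hr (sq_nonneg (v 1))]

theorem Matrix.posSemidef_two_one_iff {x y : ℝ} :
    (!![x, 1; 1, y]).PosSemidef ↔ 0 ≤ x ∧ 0 ≤ y ∧ 1 ≤ x * y := by
  rw [Matrix.posSemidef_two_iff, one_pow]

namespace ScalarSDPFeasible

variable {a γ x y : ℝ}

theorem one_le_mul (h : ScalarSDPFeasible a γ x y) : 1 ≤ x * y :=
  (Matrix.posSemidef_two_one_iff.1 h.2.2.2.2).2.2

theorem pos_left (h : ScalarSDPFeasible a γ x y) : 0 < x :=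
  pos_of_mul_pos_left (one_pos.trans_le h.one_le_mul) h.2.1

theorem pos_right (h : ScalarSDPFeasible a γ x y) : 0 < y :=
  pos_of_mul_pos_right (one_pos.trans_le h.one_le_mul) h.1

theorem inv_le_left (h : ScalarSDPFeasible a γ x y) : y⁻¹ ≤ x :=
  (inv_le_iff_one_le_mul₀ h.pos_right).2 h.one_le_mul

theorem inv_right (ha : a ≤ 0) (h : ScalarSDPFeasible a γ x y) :
    ScalarSDPFeasible a γ y⁻¹ y := by
  have hy_inv : y * y⁻¹ = 1 := mul_inv_cancel₀ h.pos_right.ne'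
  have hx_le := h.inv_le_left
  obtain ⟨-, hy, hlin, hN, -⟩ := h
  refine ⟨inv_nonneg.2 hy, hy, ?_, hN, ?_⟩
  · linarith [mul_le_mul_of_nonpos_left hx_le ha]
  · exact Matrix.posSemidef_two_one_iff.2 ⟨inv_nonneg.2 hy, hy, by rw [mul_comm, hy_inv]⟩

end ScalarSDPFeasible

theorem stmt_11_general (a α γ x y : ℝ) (ha : a < 0)
    (hfeas : ScalarSDPFeasible a γ x y)
    (hopt : ∀ x' y' : ℝ, ScalarSDPFeasible a γ x' y' →
      x + α * y + 2 * a * α ≤ x' + α * y' + 2 * a * α) :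
    0 < x ∧ 0 < y ∧ x * y = 1 := by
  have hy := hfeas.pos_right
  have hx_le : x ≤ y⁻¹ := by
    have := hopt _ _ (hfeas.inv_right ha.le)
    linarith
  refine ⟨hfeas.pos_left, hy, le_antisymm ?_ hfeas.one_le_mul⟩
  calc x * y ≤ y⁻¹ * y := mul_le_mul_of_nonneg_right hx_le hy.le
    _ = 1 := inv_mul_cancel₀ hy.ne'

theorem stmt_11 (a α γ x y : ℝ) (ha : a < 0) (hα : 0 < α) (hγ : 0 < γ)
    (hfeas : ScalarSDPFeasible a γ x y)
    (hopt : ∀ x' y' : ℝ, ScalarSDPFeasible a γ x' y' →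
      x + α * y + 2 * a * α ≤ x' + α * y' + 2 * a * α) :
    0 < x ∧ 0 < y ∧ x * y = 1 :=
  stmt_11_general a α γ x y ha hfeas hopt
end

section
/- Let A, B, C, X be n×n real matrices with X symmetric positive definite satisfying the algebraic Riccati equation A·X + X·Aᵀ − X·Cᵀ·C·X + B·Bᵀ = 0. Then Tr(C·X·Cᵀ) = 2·Tr(A) + Tr(Bᵀ·X⁻¹·B). -/
open Matrix

theorem stmt_13 (n : ℕ) (A B C X : Matrix (Fin n) (Fin n) ℝ)
    (hX : X.PosDef)
    (hric : A * X + X * Aᵀ - X * Cᵀ * C * X + B * Bᵀ = 0) :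
    (C * X * Cᵀ).trace = 2 * A.trace + (Bᵀ * X⁻¹ * B).trace := by
  have hdet : IsUnit X.det := isUnit_iff_ne_zero.mpr (ne_of_gt hX.det_pos)
  have hXi : X * X⁻¹ = 1 := X.mul_nonsing_inv hdet
  have h1 : X * Cᵀ * C * X = A * X + X * Aᵀ + B * Bᵀ := by
    rw [eq_comm, ← sub_eq_zero, ← hric]; abel
  have h2 : X * Cᵀ * C * X * X⁻¹ = (A * X + X * Aᵀ + B * Bᵀ) * X⁻¹ := by rw [h1]
  have h3 : X * Cᵀ * C = A * X * X⁻¹ + X * Aᵀ * X⁻¹ + B * Bᵀ * X⁻¹ := by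
    calc X * Cᵀ * C = X * Cᵀ * C * (X * X⁻¹) := by rw [hXi, mul_one]
    _ = A * X * X⁻¹ + X * Aᵀ * X⁻¹ + B * Bᵀ * X⁻¹ := by
        rw [← mul_assoc, h2]; noncomm_ring
  have hAX : (A * X * X⁻¹).trace = A.trace := by rw [mul_assoc, hXi, mul_one]
  have hXA : (X * Aᵀ * X⁻¹).trace = A.trace := by
    rw [trace_mul_comm, ← mul_assoc, X.nonsing_inv_mul hdet, one_mul, trace_transpose]
  have hBB : (B * Bᵀ * X⁻¹).trace = (Bᵀ * X⁻¹ * B).trace := by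
    rw [mul_assoc, trace_mul_comm]
  have hCX : (C * X * Cᵀ).trace = (X * Cᵀ * C).trace := by
    rw [mul_assoc, trace_mul_comm]
  rw [hCX, h3, trace_add, trace_add, hAX, hXA, hBB]; ring
end

section
/- Let X and Y be n×n real symmetric matrices. Then X = Y⁻¹ with X positive definite if and only if the 2n×2n block matrix [[X, I], [I, Y]] is positive semidefinite and has rank n. -/
/-!
If `X` is positive definite, the Schur complement of `X` in `M = [[X, I], [I, Y]]` is `Y - X⁻¹`,
so `M` is positive semidefinite iff `Y - X⁻¹` is, and `rank M = n + rank (Y - X⁻¹)`; hence both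
conditions together say exactly `Y = X⁻¹`. Conversely, positive semidefiniteness of `M` alone
forces `X` to be positive definite: if `xᵀ X x = 0` then `M (x, 0) = 0`, whose second block is `x`.
-/

open Matrix

open scoped ComplexOrder

theorem Submodule.finrank_prod {K V W : Type*} [DivisionRing K] [AddCommGroup V] [Module K V]
    [AddCommGroup W] [Module K W] [FiniteDimensional K V] [FiniteDimensional K W]
    (p : Submodule K V) (q : Submodule K W) :
    Module.finrank K (p.prod q) = Module.finrank K p + Module.finrank K q := by
  have h := LinearMap.finrank_range_of_inj (f := p.subtype.prodMap q.subtype)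
    (p.injective_subtype.prodMap q.injective_subtype)
  rwa [LinearMap.range_prodMap, Submodule.range_subtype, Submodule.range_subtype,
    Module.finrank_prod] at h

namespace Matrix

variable {K m n : Type*} [Field K] [Fintype n]

theorem rank_eq_zero_iff {A : Matrix m n K} : A.rank = 0 ↔ A = 0 := by
  classical
  rw [rank, Submodule.finrank_eq_zero, LinearMap.range_eq_bot, ← toLin'_apply',
    LinearEquiv.map_eq_zero_iff]

variable [Fintype m]

theorem rank_fromBlocks_zero (A : Matrix m m K) (D : Matrix n n K) :
    (fromBlocks A 0 0 D).rank = A.rank + D.rank := by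
  let e := LinearEquiv.sumArrowLequivProdArrow m n K K
  have hconj : (fromBlocks A 0 0 D).mulVecLin =
      e.symm.toLinearMap ∘ₗ (A.mulVecLin.prodMap D.mulVecLin) ∘ₗ e.toLinearMap := by
    refine LinearMap.ext fun x => funext fun i => ?_
    cases i <;> simp [e, fromBlocks_mulVec, LinearEquiv.sumArrowLequivProdArrow,
      Equiv.sumArrowEquivProdArrow]
  rw [rank, hconj, LinearMap.range_comp, LinearMap.range_comp, LinearEquiv.range,
    Submodule.map_top, LinearMap.range_prodMap, LinearEquiv.finrank_map_eq,
    Submodule.finrank_prod, rank, rank]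

theorem rank_fromBlocks_of_invertible₁₁ [DecidableEq m] [DecidableEq n] (A : Matrix m m K)
    (B : Matrix m n K) (C : Matrix n m K) (D : Matrix n n K) [Invertible A] :
    (fromBlocks A B C D).rank = Fintype.card m + (D - C * A⁻¹ * B).rank := by
  rw [fromBlocks_eq_of_invertible₁₁, invOf_eq_nonsing_inv,
    rank_mul_eq_left_of_isUnit_det _ _ (by simp),
    rank_mul_eq_right_of_isUnit_det _ _ (by simp),
    rank_fromBlocks_zero, rank_of_isUnit A (isUnit_of_invertible A)]

end Matrix

namespace Matrix.PosSemidef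

variable {𝕜 m n : Type*} [RCLike 𝕜] [Fintype m] [Fintype n] [DecidableEq m]

theorem posDef_of_fromBlocks {A : Matrix m m 𝕜} {B : Matrix m n 𝕜} {C : Matrix n m 𝕜}
    {D : Matrix n n 𝕜} (h : (fromBlocks A B C D).PosSemidef)
    (hC : ∀ x, C *ᵥ x = 0 → x = 0) : A.PosDef := by
  have hA : A.PosSemidef := h.submatrix Sum.inl
  refine hA.posDef_iff_isUnit.mpr (mulVec_injective_iff_isUnit.mp ?_)
  refine (injective_iff_map_eq_zero A.mulVecLin).mpr fun x hx => hC x ?_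
  have hq : star (x ⊕ᵥ 0) ⬝ᵥ fromBlocks A B C D *ᵥ (x ⊕ᵥ 0) = 0 := by
    simp_all [fromBlocks_mulVec, dotProduct]
  simpa [fromBlocks_mulVec] using congrArg (· ∘ Sum.inr) ((h.dotProduct_mulVec_zero_iff _).mp hq)

end Matrix.PosSemidef

theorem Matrix.PosDef.fromBlocks_one_one_posSemidef_and_rank_eq_iff {𝕜 n : Type*} [RCLike 𝕜]
    [Fintype n] [DecidableEq n] {X : Matrix n n 𝕜} (hX : X.PosDef) (Y : Matrix n n 𝕜) :
    ((fromBlocks X 1 1 Y).PosSemidef ∧ (fromBlocks X 1 1 Y).rank = Fintype.card n) ↔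
      Y = X⁻¹ := by
  let := hX.isUnit.invertible
  have hpsd := hX.fromBlocks₁₁ 1 Y
  rw [conjTranspose_one, Matrix.one_mul, Matrix.mul_one] at hpsd
  rw [hpsd, rank_fromBlocks_of_invertible₁₁, Matrix.one_mul, Matrix.mul_one, add_eq_left,
    rank_eq_zero_iff, sub_eq_zero]
  refine and_iff_right_of_imp fun h => ?_
  rw [h, sub_self]
  exact PosSemidef.zero

theorem stmt_15_general (n : ℕ) (X Y : Matrix (Fin n) (Fin n) ℝ) :
    (X = Y⁻¹ ∧ X.PosDef) ↔
      ((Matrix.fromBlocks X 1 1 Y).PosSemidef ∧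
        (Matrix.fromBlocks X 1 1 Y).rank = n) := by
  constructor
  · rintro ⟨rfl, hX⟩
    have hY : IsUnit Y.det :=
      isUnit_nonsing_inv_det_iff.mp ((isUnit_iff_isUnit_det _).mp hX.isUnit)
    simpa using (hX.fromBlocks_one_one_posSemidef_and_rank_eq_iff Y).mpr
      (nonsing_inv_nonsing_inv Y hY).symm
  · rintro ⟨hpsd, hrank⟩
    have hX : X.PosDef := hpsd.posDef_of_fromBlocks fun x hx => by simpa using hx
    have hYX : Y = X⁻¹ :=
      (hX.fromBlocks_one_one_posSemidef_and_rank_eq_iff Y).mp ⟨hpsd, by simpa using hrank⟩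
    exact ⟨by rw [hYX, nonsing_inv_nonsing_inv X ((isUnit_iff_isUnit_det _).mp hX.isUnit)], hX⟩

theorem stmt_15 (n : ℕ) (X Y : Matrix (Fin n) (Fin n) ℝ)
    (hX : X.IsSymm) (hY : Y.IsSymm) :
    (X = Y⁻¹ ∧ X.PosDef) ↔
      ((Matrix.fromBlocks X 1 1 Y).PosSemidef ∧
        (Matrix.fromBlocks X 1 1 Y).rank = n) :=
  stmt_15_general n X Y
end
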